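/- Let p, q be pmfs on X × Y with p > 0, and suppose (p,q) is under s-SJS with index set I. If additionally q(x_I, y)/p(x_I, y) = q(y)/p(y) for all x, y (the weight does not depend on x_I), then (p,q) is under label shift: q(x | y) = p(x | y) for all x, y. -/

import Mathlib

open scoped Classical

/-- Marginal pmf of `(X_I, Y)`: sum of `p (x', y)` over `x'` agreeing with `x` on `I`. -/
noncomputable def margI {d : ℕ} {Xi : Fin d → Type*} [∀ i, Fintype (Xi i)] {Y : Type*}
    (p : (∀ i, Xi i) → Y → ℝ) (I : Finset (Fin d)) (x : ∀ i, Xi i) (y : Y) : ℝ :=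
  ∑ x' : ∀ i, Xi i, if ∀ i ∈ I, x' i = x i then p x' y else 0

/-! The s-SJS identity gives `q(x, y) = p(x, y) · q(x_I, y) / p(x_I, y)`, and by assumption the weight
`q(x_I, y) / p(x_I, y)` equals `q(y) / p(y)`; so `q(x, y) = p(x, y) · q(y) / p(y)`, which is label shift. -/

theorem margI_pos {d : ℕ} {Xi : Fin d → Type*} [∀ i, Fintype (Xi i)] {Y : Type*}
    {p : (∀ i, Xi i) → Y → ℝ} (I : Finset (Fin d)) {x : ∀ i, Xi i} {y : Y}
    (hp : ∀ x', 0 ≤ p x' y) (hx : 0 < p x y) : 0 < margI p I x y := by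
  refine Finset.sum_pos' (fun x' _ => ?_) ⟨x, Finset.mem_univ x, ?_⟩
  · split_ifs
    · exact hp x'
    · exact le_rfl
  · rwa [if_pos fun _ _ => rfl]

theorem div_eq_div_of_div_eq_div_of_ratio_eq {K : Type*} [Field K] {q m Q p n P : K}
    (hp : p ≠ 0) (hn : n ≠ 0) (hP : P ≠ 0) (hcond : q / m = p / n) (hratio : m / n = Q / P) :
    q / Q = p / P := by
  have hm : m ≠ 0 := by
    rintro rfl
    rw [div_zero, eq_comm, div_eq_zero_iff] at hcond
    tauto
  have hQ : Q ≠ 0 := by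
    rintro rfl
    rw [zero_div, div_eq_zero_iff] at hratio
    tauto
  have hq : q = p * (Q / P) := calc
    q = q / m * m := (div_mul_cancel₀ q hm).symm
    _ = p * (m / n) := by rw [hcond, div_mul_eq_mul_div, mul_div_assoc]
    _ = p * (Q / P) := by rw [hratio]
  rw [hq]
  field_simp

theorem stmt_18_general {d : ℕ} {Xi : Fin d → Type*} [∀ i, Fintype (Xi i)]
    {Y : Type*}
    (p q : (∀ i, Xi i) → Y → ℝ)
    (hp : ∀ x y, 0 < p x y)
    (I : Finset (Fin d))
    -- s-SJS with index set I
    (hsjs : ∀ x y, q x y / margI q I x y = p x y / margI p I x y)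
    -- the weight q(x_I, y)/p(x_I, y) does not depend on x_I
    (hconst : ∀ x y, margI q I x y / margI p I x y
        = (∑ x', q x' y) / (∑ x', p x' y)) :
    -- label shift: q(x | y) = p(x | y)
    ∀ x y, q x y / (∑ x', q x' y) = p x y / (∑ x', p x' y) := by
  intro x y
  have hmarg : 0 < margI p I x y := margI_pos I (fun x' => (hp x' y).le) (hp x y)
  have hlabel : 0 < ∑ x', p x' y := Finset.sum_pos (fun x' _ => hp x' y) ⟨x, Finset.mem_univ x⟩
  exact div_eq_div_of_div_eq_div_of_ratio_eq (hp x y).ne' hmarg.ne' hlabel.ne' (hsjs x y) (hconst x y)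

theorem stmt_18 {d : ℕ} {Xi : Fin d → Type*} [∀ i, Fintype (Xi i)]
    {Y : Type*} [Fintype Y]
    (p q : (∀ i, Xi i) → Y → ℝ)
    (hp : ∀ x y, 0 < p x y) (hq : ∀ x y, 0 ≤ q x y)
    (hpsum : ∑ x, ∑ y, p x y = 1) (hqsum : ∑ x, ∑ y, q x y = 1)
    (s : ℕ) (I : Finset (Fin d)) (hIcard : I.card ≤ s)
    -- s-SJS with index set I
    (hsjs : ∀ x y, q x y / margI q I x y = p x y / margI p I x y)
    -- the weight q(x_I, y)/p(x_I, y) does not depend on x_I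
    (hconst : ∀ x y, margI q I x y / margI p I x y
        = (∑ x', q x' y) / (∑ x', p x' y)) :
    -- label shift: q(x | y) = p(x | y)
    ∀ x y, q x y / (∑ x', q x' y) = p x y / (∑ x', p x' y) :=
  stmt_18_general p q hp I hsjs hconst
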